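/- Let h : ℝ^n → ℝ be differentiable with L_h-Lipschitz gradient ∇h, let g : ℝ^n → ℝ be lower semicontinuous and ρ_g-weakly convex, let γ ∈ (0, 1/ρ_g), and suppose g has the implicit bounded subgradient property with constant L̂_g > 0. Let sequences (x^k)_{k≥0} in ℝ^n, (z^k)_{k≥0} in ℝ^n, (λ^k)_{k≥0} in ℝ^m and penalty parameters β_k > 0 satisfy, for every k ≥ 0: x^{k+1} = Prox_{γ,g}(z^k − γ(∇h(x^k) + Aᵀλ^{k+1})) and λ^{k+1} = λ^k + β_k(Ax^{k+1} − b). Assume b lies in the column space of A and σ̃ > 0 satisfies ‖Aᵀv‖² ≥ σ̃‖v‖² for every v in the column space of A, and set c_{γ,A} := γ²σ̃. Then for every k ≥ 1: ‖λ^{k+1} − λ^k‖² ≤ 4 c_{γ,A}⁻¹ [ 4γ²L̂_g² + ‖x^{k+1} − x^k‖² + γ²L_h²‖x^k − x^{k−1}‖² + ‖z^k − z^{k−1}‖² ]. -/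

import Mathlib

/-!
Write `r(w) := w - Prox_{γ,g}(w)`, so that `‖r(w)‖ ≤ γ L̂_g` by the implicit bounded subgradient
property. With `w^k` the argument of the prox, the primal update reads
`γ Aᵀλ^{k+1} = z^k - γ∇h(x^k) - x^{k+1} - r(w^k)`, and subtracting two consecutive instances
expresses `γ Aᵀ(λ^{k+1} - λ^k)` through the primal and auxiliary increments, the gradient
increment and two residuals. The dual update puts `λ^{k+1} - λ^k` in the column space of `A`
(because `b` is there), where `‖Aᵀv‖² ≥ σ̃‖v‖²`; squaring the triangle inequality with
`(p + q + r + s)² ≤ 4(p² + q² + r² + s²)` gives the bound.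
-/

lemma add_add_add_sq_le (p q r s : ℝ) :
    (p + q + r + s) ^ 2 ≤ 4 * (p ^ 2 + q ^ 2 + r ^ 2 + s ^ 2) := by
  nlinarith [sq_nonneg (p - q), sq_nonneg (p - r), sq_nonneg (p - s), sq_nonneg (q - r),
    sq_nonneg (q - s), sq_nonneg (r - s)]

lemma le_four_inv_mul_of_mul_le_sq {c v p q r s : ℝ} (hc : 0 < c)
    (h : c * v ≤ (p + q + r + s) ^ 2) :
    v ≤ 4 * c⁻¹ * (p ^ 2 + q ^ 2 + r ^ 2 + s ^ 2) := by
  rw [mul_comm 4, mul_assoc, le_inv_mul_iff₀ hc]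
  exact h.trans (add_add_add_sq_le p q r s)

section ProxGradStep

variable {E F : Type*} [NormedAddCommGroup E] [NormedSpace ℝ E] [AddCommGroup F] [Module ℝ F]

lemma norm_le_mul_of_norm_inv_smul_le {γ L : ℝ} (hγ : 0 < γ) {v : E} (hv : ‖γ⁻¹ • v‖ ≤ L) :
    ‖v‖ ≤ γ * L := by
  rwa [norm_smul, norm_inv, Real.norm_of_nonneg hγ.le, inv_mul_le_iff₀ hγ] at hv

lemma mul_norm_map_sub_le_of_prox_step (prox grad : E → E) (B : F →ₗ[ℝ] E) {γ Lgrad L : ℝ}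
    (hγ : 0 < γ) (hgrad : ∀ x y, ‖grad x - grad y‖ ≤ Lgrad * ‖x - y‖)
    (hres : ∀ w, ‖w - prox w‖ ≤ γ * L)
    {x₀ x₁ x₂ z₀ z₁ : E} {μ₁ μ₂ : F}
    (hx₁ : x₁ = prox (z₀ - γ • (grad x₀ + B μ₁)))
    (hx₂ : x₂ = prox (z₁ - γ • (grad x₁ + B μ₂))) :
    γ * ‖B (μ₂ - μ₁)‖
      ≤ 2 * (γ * L) + ‖x₂ - x₁‖ + γ * Lgrad * ‖x₁ - x₀‖ + ‖z₁ - z₀‖ := by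
  set w₀ := z₀ - γ • (grad x₀ + B μ₁)
  set w₁ := z₁ - γ • (grad x₁ + B μ₂)
  have hgradstep : ‖γ • (grad x₁ - grad x₀)‖ ≤ γ * Lgrad * ‖x₁ - x₀‖ := by
    rw [norm_smul_of_nonneg hγ.le, mul_assoc]
    exact mul_le_mul_of_nonneg_left (hgrad _ _) hγ.le
  have hresstep : ‖(w₁ - x₂) - (w₀ - x₁)‖ ≤ 2 * (γ * L) := by
    rw [hx₁, hx₂, two_mul]
    exact (norm_sub_le _ _).trans (add_le_add (hres w₁) (hres w₀))
  have hidentity : γ • B (μ₂ - μ₁)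
      = (z₁ - z₀) - γ • (grad x₁ - grad x₀) - (x₂ - x₁) - ((w₁ - x₂) - (w₀ - x₁)) := by
    simp only [w₀, w₁, map_sub, smul_sub, smul_add]
    abel
  rw [← norm_smul_of_nonneg hγ.le, hidentity]
  linarith [norm_sub_le ((z₁ - z₀) - γ • (grad x₁ - grad x₀) - (x₂ - x₁)) ((w₁ - x₂) - (w₀ - x₁)),
    norm_sub_le ((z₁ - z₀) - γ • (grad x₁ - grad x₀)) (x₂ - x₁),
    norm_sub_le (z₁ - z₀) (γ • (grad x₁ - grad x₀))]

end ProxGradStep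

theorem stmt_7_general (n m : ℕ) (A : Matrix (Fin m) (Fin n) ℝ) (b : EuclideanSpace ℝ (Fin m))
    (h' : EuclideanSpace ℝ (Fin n) → EuclideanSpace ℝ (Fin n))
    (γ Lh Lghat : ℝ)
    (hγ0 : 0 < γ)
    (hLh : ∀ x y, ‖h' x - h' y‖ ≤ Lh * ‖x - y‖)
    (prox : EuclideanSpace ℝ (Fin n) → EuclideanSpace ℝ (Fin n))
    (hbnd : ∀ w, ‖γ⁻¹ • (w - prox w)‖ ≤ Lghat)
    (x z : ℕ → EuclideanSpace ℝ (Fin n)) (lam : ℕ → EuclideanSpace ℝ (Fin m))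
    (β : ℕ → ℝ)
    (hx : ∀ k, x (k + 1)
        = prox (z k - γ • (h' (x k) + Matrix.toEuclideanLin A.transpose (lam (k + 1)))))
    (hlam : ∀ k, lam (k + 1) = lam k + β k • (Matrix.toEuclideanLin A (x (k + 1)) - b))
    (σ : ℝ) (hσ : 0 < σ)
    (hb : b ∈ LinearMap.range (Matrix.toEuclideanLin A))
    (hσA : ∀ v ∈ LinearMap.range (Matrix.toEuclideanLin A),
      σ * ‖v‖ ^ 2 ≤ ‖Matrix.toEuclideanLin A.transpose v‖ ^ 2) :
    ∀ k, 1 ≤ k →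
      ‖lam (k + 1) - lam k‖ ^ 2
        ≤ 4 * (γ ^ 2 * σ)⁻¹ * (4 * γ ^ 2 * Lghat ^ 2 + ‖x (k + 1) - x k‖ ^ 2
            + γ ^ 2 * Lh ^ 2 * ‖x k - x (k - 1)‖ ^ 2 + ‖z k - z (k - 1)‖ ^ 2) := by
  intro k hk
  obtain ⟨j, rfl⟩ : ∃ j, k = j + 1 := ⟨k - 1, (Nat.succ_pred_eq_of_pos hk).symm⟩
  rw [Nat.add_sub_cancel]
  have hdual : lam (j + 1 + 1) - lam (j + 1) ∈ LinearMap.range (Matrix.toEuclideanLin A) := by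
    rw [hlam, add_sub_cancel_left]
    exact Submodule.smul_mem _ _ (sub_mem (LinearMap.mem_range_self _ _) hb)
  have hstep := mul_norm_map_sub_le_of_prox_step prox h' (Matrix.toEuclideanLin A.transpose) hγ0
    hLh (fun w => norm_le_mul_of_norm_inv_smul_le hγ0 (hbnd w)) (hx j) (hx (j + 1))
  have hsq : γ ^ 2 * σ * ‖lam (j + 1 + 1) - lam (j + 1)‖ ^ 2
      ≤ (2 * (γ * Lghat) + ‖x (j + 1 + 1) - x (j + 1)‖ + γ * Lh * ‖x (j + 1) - x j‖
        + ‖z (j + 1) - z j‖) ^ 2 :=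
    calc γ ^ 2 * σ * ‖lam (j + 1 + 1) - lam (j + 1)‖ ^ 2
        ≤ (γ * ‖Matrix.toEuclideanLin A.transpose (lam (j + 1 + 1) - lam (j + 1))‖) ^ 2 := by
          rw [mul_assoc, mul_pow]
          exact mul_le_mul_of_nonneg_left (hσA _ hdual) (sq_nonneg γ)
      _ ≤ _ := pow_le_pow_left₀ (by positivity) hstep 2
  exact (le_four_inv_mul_of_mul_le_sq (by positivity) hsq).trans_eq (by ring)

/-- Lemma 6(b) (LiMEAL: controlling dual by primal, implicit bounded subgradient case). -/
theorem stmt_7 (n m : ℕ) (A : Matrix (Fin m) (Fin n) ℝ) (b : EuclideanSpace ℝ (Fin m))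
    (h : EuclideanSpace ℝ (Fin n) → ℝ) (h' : EuclideanSpace ℝ (Fin n) → EuclideanSpace ℝ (Fin n))
    (g : EuclideanSpace ℝ (Fin n) → ℝ) (ρg γ Lh Lghat : ℝ)
    (hρg : 0 < ρg) (hγ0 : 0 < γ) (hγ : γ < 1 / ρg) (hLg : 0 < Lghat)
    (hh' : ∀ x, HasGradientAt h (h' x) x)
    (hLh : ∀ x y, ‖h' x - h' y‖ ≤ Lh * ‖x - y‖)
    (hlsc : LowerSemicontinuous g)
    (hwc : ConvexOn ℝ Set.univ fun x => g x + ρg / 2 * ‖x‖ ^ 2)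
    (prox : EuclideanSpace ℝ (Fin n) → EuclideanSpace ℝ (Fin n))
    (hproxmin : ∀ w x, g (prox w) + 1 / (2 * γ) * ‖prox w - w‖ ^ 2
        ≤ g x + 1 / (2 * γ) * ‖x - w‖ ^ 2)
    (hproxuniq : ∀ w x, (∀ y, g x + 1 / (2 * γ) * ‖x - w‖ ^ 2
        ≤ g y + 1 / (2 * γ) * ‖y - w‖ ^ 2) → x = prox w)
    (hbnd : ∀ w, ‖γ⁻¹ • (w - prox w)‖ ≤ Lghat)
    (x z : ℕ → EuclideanSpace ℝ (Fin n)) (lam : ℕ → EuclideanSpace ℝ (Fin m))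
    (β : ℕ → ℝ) (hβ : ∀ k, 0 < β k)
    (hx : ∀ k, x (k + 1)
        = prox (z k - γ • (h' (x k) + Matrix.toEuclideanLin A.transpose (lam (k + 1)))))
    (hlam : ∀ k, lam (k + 1) = lam k + β k • (Matrix.toEuclideanLin A (x (k + 1)) - b))
    (σ : ℝ) (hσ : 0 < σ)
    (hb : b ∈ LinearMap.range (Matrix.toEuclideanLin A))
    (hσA : ∀ v ∈ LinearMap.range (Matrix.toEuclideanLin A),
      σ * ‖v‖ ^ 2 ≤ ‖Matrix.toEuclideanLin A.transpose v‖ ^ 2) :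
    ∀ k, 1 ≤ k →
      ‖lam (k + 1) - lam k‖ ^ 2
        ≤ 4 * (γ ^ 2 * σ)⁻¹ * (4 * γ ^ 2 * Lghat ^ 2 + ‖x (k + 1) - x k‖ ^ 2
            + γ ^ 2 * Lh ^ 2 * ‖x k - x (k - 1)‖ ^ 2 + ‖z k - z (k - 1)‖ ^ 2) :=
  stmt_7_general n m A b h' γ Lh Lghat hγ0 hLh prox hbnd x z lam β hx hlam σ hσ hb hσA
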